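/- arXiv:1204.0428 — 4 statements merged into one kernel-verified Lean document; each statement's English description precedes it below -/
import Mathlib

section
/- For every integer n ≥ 1, the map F_n : ℂ^{2n+1} → ℂ^{2n+1} defined in coordinates (a, b_1, c_1, …, b_n, c_n) by F_n(a, b_1, c_1, …, b_n, c_n) = (a², −a b_1, b_1² − a c_1, …, −a b_n, b_n² − a c_n) satisfies F_n(F_n(a, b_1, c_1, …, b_n, c_n)) = a³ · (a, b_1, c_1, …, b_n, c_n) for every (a, b_1, c_1, …, b_n, c_n) ∈ ℂ^{2n+1}. -/
/-- The quadratic map `Fₙ : ℂ^{2n+1} → ℂ^{2n+1}` in coordinates `(a, bᵢ, cᵢ)`: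
`Fₙ(a, b₁, c₁, …, bₙ, cₙ) = (a², −ab₁, b₁² − ac₁, …, −abₙ, bₙ² − acₙ)`. -/
def Fc3 (n : ℕ) : (ℂ × (Fin n → ℂ) × (Fin n → ℂ)) → (ℂ × (Fin n → ℂ) × (Fin n → ℂ)) :=
  fun p => (p.1 ^ 2, fun i => -(p.1 * p.2.1 i), fun i => (p.2.1 i) ^ 2 - p.1 * p.2.2 i)

/-- For every `n ≥ 1`, `Fₙ(Fₙ(a, b₁, c₁, …, bₙ, cₙ)) = a³ · (a, b₁, c₁, …, bₙ, cₙ)`. -/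
theorem Fc3_involutive (n : ℕ) (hn : 1 ≤ n)
    (p : ℂ × (Fin n → ℂ) × (Fin n → ℂ)) :
    Fc3 n (Fc3 n p) = p.1 ^ 3 • p := by
  obtain ⟨a, b, c⟩ := p
  simp only [Fc3, Prod.smul_mk, Prod.mk.injEq, Pi.smul_def, smul_eq_mul]
  refine ⟨by ring, funext fun i => by ring, funext fun i => by ring⟩
end

section
/- For every λ ∈ ℂ, the map F_λ : ℂ⁵ → ℂ⁵ defined by F_λ(x, y, z, t, u) = (x², −xy, −xz, y² + λz² − xt, 2yz − xu) satisfies F_λ(F_λ(x, y, z, t, u)) = x³ · (x, y, z, t, u) for every (x, y, z, t, u) ∈ ℂ⁵. -/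
/-- The family of quadratic maps `F_λ : ℂ⁵ → ℂ⁵`,
`F_λ(x,y,z,t,u) = (x², −xy, −xz, y² + λz² − xt, 2yz − xu)`. -/
def Flam (l : ℂ) : (ℂ × ℂ × ℂ × ℂ × ℂ) → (ℂ × ℂ × ℂ × ℂ × ℂ) :=
  fun p => (p.1 ^ 2, -(p.1 * p.2.1), -(p.1 * p.2.2.1),
    p.2.1 ^ 2 + l * p.2.2.1 ^ 2 - p.1 * p.2.2.2.1,
    2 * p.2.1 * p.2.2.1 - p.1 * p.2.2.2.2)

/-- `F_λ(F_λ(x,y,z,t,u)) = x³ · (x,y,z,t,u)` for every `λ ∈ ℂ` and `(x,y,z,t,u) ∈ ℂ⁵`. -/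
theorem Flam_involutive (l : ℂ) (x y z t u : ℂ) :
    Flam l (Flam l (x, y, z, t, u)) = x ^ 3 • ((x, y, z, t, u) : ℂ × ℂ × ℂ × ℂ × ℂ) := by
  simp only [Flam, Prod.smul_mk, smul_eq_mul, Prod.mk.injEq]
  refine ⟨by ring, by ring, by ring, by ring, by ring⟩
end

section
/- Let V be a complex vector space, F : V → V a map homogeneous of degree 2 (i.e., F(c·x) = c²·F(x) for all c ∈ ℂ, x ∈ V), and N : V → ℂ a function homogeneous of degree 3 (i.e., N(c·x) = c³·N(x)), such that F(F(x)) = N(x)·x and N(F(x)) = N(x)² for all x ∈ V. Then the map G : V × ℂ → V × ℂ defined by G(x, r) = (r·F(x), N(x)) satisfies G(G(x, r)) = r² N(x)² · (x, r) for every (x, r) ∈ V × ℂ. -/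
/-- **Spampinato-type construction.** If `F : V → V` is homogeneous of degree 2,
`N : V → ℂ` is homogeneous of degree 3, `F ∘ F = N • id` and `N ∘ F = N²`, then
the map `G(x, r) = (r • F x, N x)` on `V × ℂ` satisfies
`G(G(x, r)) = r² N(x)² • (x, r)`. -/
theorem spampinato_cubo_cubic
    (V : Type) [AddCommGroup V] [Module ℂ V]
    (F : V → V) (N : V → ℂ)
    (hF2 : ∀ (c : ℂ) (x : V), F (c • x) = c ^ 2 • F x)
    (hN3 : ∀ (c : ℂ) (x : V), N (c • x) = c ^ 3 * N x)
    (hFF : ∀ x : V, F (F x) = N x • x)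
    (hNF : ∀ x : V, N (F x) = N x ^ 2)
    (G : V × ℂ → V × ℂ)
    (hG : ∀ (x : V) (r : ℂ), G (x, r) = (r • F x, N x)) :
    ∀ (x : V) (r : ℂ),
      G (G (x, r)) = (r ^ 2 * N x ^ 2) • ((x, r) : V × ℂ) := by
  intro x r
  rw [hG, hG, hF2, hFF, hN3, hNF, Prod.smul_mk, smul_smul, smul_smul]
  simp only []
  refine Prod.ext ?_ ?_ <;> simp [smul_smul] <;> ring_nf
end

section
/- Let J be a 3-dimensional complex Jordan algebra of rank 3, i.e., a commutative (not necessarily associative) unital ℂ-algebra of dimension 3 satisfying the Jordan identity (x·x)·(x·y) = x·((x·x)·y) for all x, y ∈ J, and containing an element x such that (1, x, x·x) is linearly independent. Then J is isomorphic as a ℂ-algebra to exactly one of the following three algebras: ℂ × ℂ × ℂ, ℂ × ℂ[X]/(X²), and ℂ[X]/(X³). -/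
/-!
Choose `x` with `(1, x, x²)` a basis and write `x·x² = α + βx + γx²`. The Jordan identity at
`(x, x)` gives `x²·x² = x·(x·x²)`, so every product of basis vectors is determined by this
relation exactly as in `ℂ[X]/(p)` with `p = X³ - γX² - βX - α`; hence `J ≅ ℂ[X]/(p)`.
Over `ℂ` the cubic `p` splits, and the Chinese remainder theorem together with the shift
`X ↦ X + r` turns `ℂ[X]/(p)` into `ℂ × ℂ × ℂ`, `ℂ × ℂ[X]/(X²)` or `ℂ[X]/(X³)` according to the
root multiplicities. These three are pairwise non-isomorphic: only the first is reduced, and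
only the last is local.
-/

open Polynomial

/-- A (not necessarily associative) unital commutative ℂ-algebra `(J, mul, one)`
is isomorphic, as a ℂ-algebra, to the (associative) ℂ-algebra `A` if there is a
ℂ-linear equivalence sending `one` to `1` and `mul` to the product of `A`. -/
def IsAlgIsoTo (J : Type) [AddCommGroup J] [Module ℂ J]
    (mul : J →ₗ[ℂ] J →ₗ[ℂ] J) (one : J)
    (A : Type) [Ring A] [Algebra ℂ A] : Prop :=
  ∃ e : J ≃ₗ[ℂ] A, e one = 1 ∧ ∀ x y : J, e (mul x y) = e x * e y

theorem LinearMap.map_mul_of_basis {R J A ι : Type*} [CommRing R] [AddCommGroup J] [Module R J]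
    [Ring A] [Algebra R A] (mul : J →ₗ[R] J →ₗ[R] J) (e : J →ₗ[R] A) (b : Module.Basis ι R J)
    (h : ∀ i j, e (mul (b i) (b j)) = e (b i) * e (b j)) (u v : J) :
    e (mul u v) = e u * e v :=
  LinearMap.congr_fun₂
    (LinearMap.ext_basis (B := mul.compr₂ e) (B' := (LinearMap.mul R A).compl₁₂ e e) b b h) u v

theorem exists_linearEquiv_adjoinRoot_of_basis {K J : Type*} [CommRing K] [Nontrivial K]
    [AddCommGroup J] [Module K J] (mul : J →ₗ[K] J →ₗ[K] J) (one x : J)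
    (hcomm : ∀ u v, mul u v = mul v u) (hone : ∀ u, mul one u = u)
    (hx : mul (mul x x) (mul x x) = mul x (mul (mul x x) x))
    (b : Module.Basis (Fin 3) K J) (hb : ⇑b = ![one, x, mul x x]) :
    ∃ p : K[X], p.Monic ∧ p.natDegree = 3 ∧
      ∃ e : J ≃ₗ[K] AdjoinRoot p, e one = 1 ∧ ∀ u v, e (mul u v) = e u * e v := by
  set c := b.repr (mul x (mul x x))
  set p : K[X] := X ^ 3 - C (c 2) * X ^ 2 - C (c 1) * X - C (c 0) with hp_def
  have hp : p.Monic := by rw [hp_def]; monicity!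
  have hdeg : p.natDegree = 3 := by rw [hp_def]; compute_degree!
  refine ⟨p, hp, hdeg, ?_⟩
  set r := AdjoinRoot.root p
  have hroot : r ^ 3 = algebraMap K _ (c 0) + algebraMap K _ (c 1) * r +
      algebraMap K _ (c 2) * r ^ 2 := by
    have h : aeval r p = 0 := by rw [AdjoinRoot.aeval_eq, AdjoinRoot.mk_self]
    simp only [hp_def, map_sub, map_mul, map_pow, aeval_X, aeval_C] at h
    linear_combination h
  set bA : Module.Basis (Fin 3) K (AdjoinRoot p) :=
    (AdjoinRoot.powerBasis' hp).basis.reindex (finCongr (by simp [hdeg]))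
  set e := b.equiv bA (Equiv.refl _)
  have he : ∀ i, e (b i) = r ^ (i : ℕ) := fun i => by simp [e, bA, r]
  have e_one : e one = 1 := by simpa [hb] using he 0
  have e_x : e x = r := by simpa [hb] using he 1
  have e_x2 : e (mul x x) = r ^ 2 := by simpa [hb] using he 2
  have mul_one' : ∀ u, mul u one = u := fun u => hcomm u one ▸ hone u
  have hx3 : mul x (mul x x) = c 0 • one + c 1 • x + c 2 • mul x x := by
    simpa [Fin.sum_univ_three, hb] using (b.sum_repr (mul x (mul x x))).symm
  have e_x3 : e (mul x (mul x x)) = r ^ 3 := by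
    simp only [hx3, map_add, map_smul, Algebra.smul_def, e_one, e_x, e_x2, hroot, mul_one]
  have e_x4 : e (mul (mul x x) (mul x x)) = r ^ 4 := by
    rw [hx, hcomm _ x, hx3]
    simp only [map_add, map_smul, Algebra.smul_def, mul_one', e_x, e_x2, e_x3]
    linear_combination (-r) * hroot
  refine ⟨e, e_one, LinearMap.map_mul_of_basis mul e.toLinearMap b fun i j => ?_⟩
  fin_cases i <;> fin_cases j <;>
    simp [hb, hone, mul_one', hcomm (mul x x) x, e_one, e_x, e_x2, e_x3, e_x4] <;> ring

namespace Ideal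

noncomputable def quotientSpanMulAlgEquivProd {R A : Type*} [CommRing R] [CommRing A]
    [Algebra R A] {a b : A} (h : IsCoprime a b) :
    (A ⧸ span {a * b}) ≃ₐ[R] (A ⧸ span {a}) × (A ⧸ span {b}) :=
  (quotientEquivAlgOfEq R (span_singleton_mul_span_singleton a b).symm).trans <|
    AlgEquiv.ofRingEquiv (f := quotientMulEquivQuotientProd _ _
      ((isCoprime_span_singleton_iff a b).2 h)) fun _ => rfl

end Ideal

namespace Polynomial

noncomputable def quotientSpanXSubCPowAlgEquiv {R : Type*} [CommRing R] (r : R) (n : ℕ) :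
    (R[X] ⧸ Ideal.span {(X - C r) ^ n}) ≃ₐ[R] R[X] ⧸ Ideal.span {(X : R[X]) ^ n} :=
  Ideal.quotientEquivAlg _ _ (algEquivAevalXAddC r) <| by
    simp [Ideal.map_span, algEquivAevalXAddC]

theorem not_isReduced_quotient_span_X_pow {R : Type*} [CommRing R] [Nontrivial R] {n : ℕ}
    (hn : 2 ≤ n) : ¬ IsReduced (R[X] ⧸ Ideal.span {(X : R[X]) ^ n}) := by
  intro h
  have hX : IsNilpotent (Ideal.Quotient.mk (Ideal.span {(X : R[X]) ^ n}) X) :=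
    ⟨n, by rw [← map_pow, Ideal.Quotient.eq_zero_iff_mem]; exact Ideal.mem_span_singleton_self _⟩
  have hdvd := h.eq_zero _ hX
  rw [Ideal.Quotient.eq_zero_iff_mem, Ideal.mem_span_singleton, X_pow_dvd_iff] at hdvd
  simpa using hdvd 1 hn

variable {K : Type*} [Field K]

theorem isCoprime_X_sub_C {a b : K} (h : a ≠ b) : IsCoprime (X - C a) (X - C b) :=
  isCoprime_X_sub_C_of_isUnit_sub (sub_ne_zero.2 h).isUnit

instance isLocalRing_quotient_span_X_pow {n : ℕ} [NeZero n] :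
    IsLocalRing (K[X] ⧸ Ideal.span {(X : K[X]) ^ n}) := by
  have : Nontrivial (K[X] ⧸ Ideal.span {(X : K[X]) ^ n}) := by
    rw [Ideal.Quotient.nontrivial_iff, Ne, Ideal.span_singleton_eq_top,
      isUnit_pow_iff (NeZero.ne n)]
    exact not_isUnit_X
  refine IsLocalRing.of_isUnit_or_isUnit_one_sub_self fun a => ?_
  obtain ⟨q, rfl⟩ := Ideal.Quotient.mk_surjective a
  have hnil : IsNilpotent
      (Ideal.Quotient.mk (Ideal.span {(X : K[X]) ^ n}) (q - C (q.coeff 0))) := by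
    refine ⟨n, ?_⟩
    rw [← map_pow, Ideal.Quotient.eq_zero_iff_mem, Ideal.mem_span_singleton]
    exact pow_dvd_pow_of_dvd (X_dvd_iff.2 (by simp)) n
  by_cases h0 : q.coeff 0 = 0
  · right
    simpa [h0] using hnil.isUnit_one_sub
  · left
    have hu : IsUnit (Ideal.Quotient.mk (Ideal.span {(X : K[X]) ^ n}) (C (q.coeff 0))) :=
      (isUnit_C.2 (Ne.isUnit h0)).map _
    simpa using hnil.isUnit_add_left_of_commute hu (Commute.all _ _)

theorem quotient_X_sub_C_mul_X_sub_C_mul_X_sub_C_trichotomy (a b c : K) :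
    Nonempty ((K[X] ⧸ Ideal.span {(X - C a) * (X - C b) * (X - C c)}) ≃ₐ[K] K × K × K) ∨
    Nonempty ((K[X] ⧸ Ideal.span {(X - C a) * (X - C b) * (X - C c)}) ≃ₐ[K]
      K × (K[X] ⧸ Ideal.span {(X : K[X]) ^ 2})) ∨
    Nonempty ((K[X] ⧸ Ideal.span {(X - C a) * (X - C b) * (X - C c)}) ≃ₐ[K]
      K[X] ⧸ Ideal.span {(X : K[X]) ^ 3}) := by
  have simple_double {s r : K} (h : s ≠ r) :
      Nonempty ((K[X] ⧸ Ideal.span {(X - C s) * (X - C r) ^ 2}) ≃ₐ[K]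
        K × (K[X] ⧸ Ideal.span {(X : K[X]) ^ 2})) :=
    ⟨(Ideal.quotientSpanMulAlgEquivProd (isCoprime_X_sub_C h).pow_right).trans <|
      (quotientSpanXSubCAlgEquiv s).prodCongr (quotientSpanXSubCPowAlgEquiv r 2)⟩
  by_cases hab : a = b
  · subst hab
    by_cases hac : a = c
    · subst hac
      rw [show (X - C a) * (X - C a) * (X - C a) = (X - C a) ^ 3 by ring]
      exact Or.inr (Or.inr ⟨quotientSpanXSubCPowAlgEquiv a 3⟩)
    · rw [show (X - C a) * (X - C a) * (X - C c) = (X - C c) * (X - C a) ^ 2 by ring]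
      exact Or.inr (Or.inl (simple_double (Ne.symm hac)))
  by_cases hac : a = c
  · subst hac
    rw [show (X - C a) * (X - C b) * (X - C a) = (X - C b) * (X - C a) ^ 2 by ring]
    exact Or.inr (Or.inl (simple_double (Ne.symm hab)))
  by_cases hbc : b = c
  · subst hbc
    rw [show (X - C a) * (X - C b) * (X - C b) = (X - C a) * (X - C b) ^ 2 by ring]
    exact Or.inr (Or.inl (simple_double hab))
  rw [mul_assoc]
  exact Or.inl ⟨(Ideal.quotientSpanMulAlgEquivProd
    ((isCoprime_X_sub_C hab).mul_right (isCoprime_X_sub_C hac))).trans <|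
      (quotientSpanXSubCAlgEquiv a).prodCongr <|
        (Ideal.quotientSpanMulAlgEquivProd (isCoprime_X_sub_C hbc)).trans <|
          (quotientSpanXSubCAlgEquiv b).prodCongr (quotientSpanXSubCAlgEquiv c)⟩

theorem Monic.quotient_trichotomy_of_natDegree_eq_three [IsAlgClosed K] {p : K[X]}
    (hp : p.Monic) (hdeg : p.natDegree = 3) :
    Nonempty ((K[X] ⧸ Ideal.span {p}) ≃ₐ[K] K × K × K) ∨
    Nonempty ((K[X] ⧸ Ideal.span {p}) ≃ₐ[K] K × (K[X] ⧸ Ideal.span {(X : K[X]) ^ 2})) ∨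
    Nonempty ((K[X] ⧸ Ideal.span {p}) ≃ₐ[K] K[X] ⧸ Ideal.span {(X : K[X]) ^ 3}) := by
  have hs : p.Splits := IsAlgClosed.splits p
  obtain ⟨a, b, c, hroots⟩ :=
    Multiset.card_eq_three.mp ((splits_iff_card_roots.mp hs).trans hdeg)
  have hfactor : p = (X - C a) * (X - C b) * (X - C c) := by
    rw [hs.eq_prod_roots_of_monic hp, hroots]
    simp [mul_assoc]
  exact hfactor ▸ quotient_X_sub_C_mul_X_sub_C_mul_X_sub_C_trichotomy a b c

end Polynomial

theorem IsReduced.of_prod_right {R S : Type*} [MonoidWithZero R] [MonoidWithZero S]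
    (h : IsReduced (R × S)) : IsReduced S :=
  ⟨fun x ⟨n, hn⟩ => congrArg Prod.snd (h.eq_zero ((0 : R), x) ⟨n + 1, by simp [pow_succ, hn]⟩)⟩

namespace IsAlgIsoTo

variable {J : Type} [AddCommGroup J] [Module ℂ J] {mul : J →ₗ[ℂ] J →ₗ[ℂ] J} {one : J}
  {A B : Type}

theorem trans [Ring A] [Algebra ℂ A] [Ring B] [Algebra ℂ B] (h : IsAlgIsoTo J mul one A)
    (f : A ≃ₐ[ℂ] B) : IsAlgIsoTo J mul one B :=
  let ⟨e, he_one, he_mul⟩ := h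
  ⟨e.trans f.toLinearEquiv, by simp [he_one], fun x y => by simp [he_mul]⟩

theorem nonempty_algEquiv [Ring A] [Algebra ℂ A] [Ring B] [Algebra ℂ B]
    (hA : IsAlgIsoTo J mul one A) (hB : IsAlgIsoTo J mul one B) : Nonempty (A ≃ₐ[ℂ] B) := by
  obtain ⟨e₁, he₁_one, he₁_mul⟩ := hA
  obtain ⟨e₂, he₂_one, he₂_mul⟩ := hB
  refine ⟨AlgEquiv.ofLinearEquiv (e₁.symm.trans e₂) (by simp [← he₁_one, he₂_one]) ?_⟩
  intro a b
  obtain ⟨u, rfl⟩ := e₁.surjective a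
  obtain ⟨v, rfl⟩ := e₁.surjective b
  simp [← he₁_mul, he₂_mul]

theorem isReduced [Ring A] [Algebra ℂ A] [Ring B] [Algebra ℂ B] [IsReduced A]
    (hA : IsAlgIsoTo J mul one A) (hB : IsAlgIsoTo J mul one B) : IsReduced B :=
  let ⟨e⟩ := hB.nonempty_algEquiv hA
  isReduced_of_injective e e.injective

theorem isLocalRing [CommRing A] [Algebra ℂ A] [Ring B] [Algebra ℂ B] [IsLocalRing A]
    (hA : IsAlgIsoTo J mul one A) (hB : IsAlgIsoTo J mul one B) : IsLocalRing B :=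
  let ⟨e⟩ := hA.nonempty_algEquiv hB
  have : Nontrivial B := e.toEquiv.symm.nontrivial
  IsLocalRing.of_surjective' (e : A →+* B) e.surjective

end IsAlgIsoTo

theorem classification_rank3_jordan_dim3_general
    (J : Type) [AddCommGroup J] [Module ℂ J]
    (mul : J →ₗ[ℂ] J →ₗ[ℂ] J) (one : J)
    (hcomm : ∀ x y : J, mul x y = mul y x)
    (hone : ∀ x : J, mul one x = x)
    (hjordan : ∀ x y : J, mul (mul x x) (mul x y) = mul x (mul (mul x x) y))
    (hdim : Module.finrank ℂ J = 3)
    (hrank : ∃ x : J, LinearIndependent ℂ ![one, x, mul x x]) :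
    (IsAlgIsoTo J mul one (ℂ × ℂ × ℂ) ∧
      ¬ IsAlgIsoTo J mul one (ℂ × (ℂ[X] ⧸ Ideal.span {(X : ℂ[X]) ^ 2})) ∧
      ¬ IsAlgIsoTo J mul one (ℂ[X] ⧸ Ideal.span {(X : ℂ[X]) ^ 3})) ∨
    (¬ IsAlgIsoTo J mul one (ℂ × ℂ × ℂ) ∧
      IsAlgIsoTo J mul one (ℂ × (ℂ[X] ⧸ Ideal.span {(X : ℂ[X]) ^ 2})) ∧
      ¬ IsAlgIsoTo J mul one (ℂ[X] ⧸ Ideal.span {(X : ℂ[X]) ^ 3})) ∨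
    (¬ IsAlgIsoTo J mul one (ℂ × ℂ × ℂ) ∧
      ¬ IsAlgIsoTo J mul one (ℂ × (ℂ[X] ⧸ Ideal.span {(X : ℂ[X]) ^ 2})) ∧
      IsAlgIsoTo J mul one (ℂ[X] ⧸ Ideal.span {(X : ℂ[X]) ^ 3})) := by
  obtain ⟨x, hx⟩ := hrank
  obtain ⟨p, hp, hdeg, hiso⟩ := exists_linearEquiv_adjoinRoot_of_basis mul one x hcomm hone
    (hjordan x x) (basisOfLinearIndependentOfCardEqFinrank hx (by simp [hdim]))
    (coe_basisOfLinearIndependentOfCardEqFinrank hx _)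
  have hJ : IsAlgIsoTo J mul one (ℂ[X] ⧸ Ideal.span {p}) := hiso
  have not_reduced₂ : ¬ IsReduced (ℂ × (ℂ[X] ⧸ Ideal.span {(X : ℂ[X]) ^ 2})) :=
    fun h => not_isReduced_quotient_span_X_pow le_rfl h.of_prod_right
  have not_reduced₃ : ¬ IsReduced (ℂ[X] ⧸ Ideal.span {(X : ℂ[X]) ^ 3}) :=
    not_isReduced_quotient_span_X_pow (by norm_num)
  have not_local₂ :=
    IsLocalRing.not_isLocalRing_of_prod_of_nontrivial ℂ (ℂ[X] ⧸ Ideal.span {(X : ℂ[X]) ^ 2})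
  rcases hp.quotient_trichotomy_of_natDegree_eq_three hdeg with ⟨⟨e⟩⟩ | ⟨⟨e⟩⟩ | ⟨⟨e⟩⟩
  · have h₁ := hJ.trans e
    exact Or.inl ⟨h₁, fun h₂ => not_reduced₂ (h₁.isReduced h₂),
      fun h₃ => not_reduced₃ (h₁.isReduced h₃)⟩
  · have h₂ := hJ.trans e
    exact Or.inr (Or.inl ⟨fun h₁ => not_reduced₂ (h₁.isReduced h₂), h₂,
      fun h₃ => not_local₂ (h₃.isLocalRing h₂)⟩)
  · have h₃ := hJ.trans e
    exact Or.inr (Or.inr ⟨fun h₁ => not_reduced₃ (h₁.isReduced h₃),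
      fun h₂ => not_local₂ (h₃.isLocalRing h₂), h₃⟩)

/-- **Classification of 3-dimensional rank 3 complex Jordan algebras.**
A 3-dimensional complex Jordan algebra of rank 3 (i.e. containing an element
`x` with `(1, x, x·x)` linearly independent) is isomorphic as a ℂ-algebra to
exactly one of `ℂ × ℂ × ℂ`, `ℂ × ℂ[X]/(X²)` and `ℂ[X]/(X³)`. -/
theorem classification_rank3_jordan_dim3
    (J : Type) [AddCommGroup J] [Module ℂ J] [FiniteDimensional ℂ J]
    (mul : J →ₗ[ℂ] J →ₗ[ℂ] J) (one : J)
    (hcomm : ∀ x y : J, mul x y = mul y x)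
    (hone : ∀ x : J, mul one x = x)
    (hjordan : ∀ x y : J, mul (mul x x) (mul x y) = mul x (mul (mul x x) y))
    (hdim : Module.finrank ℂ J = 3)
    (hrank : ∃ x : J, LinearIndependent ℂ ![one, x, mul x x]) :
    (IsAlgIsoTo J mul one (ℂ × ℂ × ℂ) ∧
      ¬ IsAlgIsoTo J mul one (ℂ × (ℂ[X] ⧸ Ideal.span {(X : ℂ[X]) ^ 2})) ∧
      ¬ IsAlgIsoTo J mul one (ℂ[X] ⧸ Ideal.span {(X : ℂ[X]) ^ 3})) ∨
    (¬ IsAlgIsoTo J mul one (ℂ × ℂ × ℂ) ∧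
      IsAlgIsoTo J mul one (ℂ × (ℂ[X] ⧸ Ideal.span {(X : ℂ[X]) ^ 2})) ∧
      ¬ IsAlgIsoTo J mul one (ℂ[X] ⧸ Ideal.span {(X : ℂ[X]) ^ 3})) ∨
    (¬ IsAlgIsoTo J mul one (ℂ × ℂ × ℂ) ∧
      ¬ IsAlgIsoTo J mul one (ℂ × (ℂ[X] ⧸ Ideal.span {(X : ℂ[X]) ^ 2})) ∧
      IsAlgIsoTo J mul one (ℂ[X] ⧸ Ideal.span {(X : ℂ[X]) ^ 3})) :=
  classification_rank3_jordan_dim3_general J mul one hcomm hone hjordan hdim hrank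
end
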